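/- For any unrooted trees T₁ and T₂ and any fixed rooting r₁ of T₁, there exists a rooting r₂ of T₂ such that the rooted edit distance between (T₁,r₁) and (T₂,r₂) equals the unrooted edit distance between T₁ and T₂ (the minimum over all pairs of rootings). -/
import Mathlib


/-- A rooted, ordered, edge-labeled tree: a root with an ordered list of
(edge label, child subtree) pairs. -/
inductive RTree (α : Type) : Type
  | node : List (α × RTree α) → RTree α

namespace RTree
variable {α : Type}

mutual
  /-- Number of edges of a rooted tree. -/
  def numEdges : RTree α → ℕ
    | .node cs => numEdgesL cs
  def numEdgesL : List (α × RTree α) → ℕ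
    | [] => 0
    | (_, t) :: rest => 1 + numEdges t + numEdgesL rest
end

/-- One edit operation on a rooted ordered edge-labeled tree:
relabel an edge, or contract an edge (the children of the lower endpoint
replace it, in order, in its parent's child list). -/
inductive Step : RTree α → RTree α → Prop
  | relabel (pre post : List (α × RTree α)) (a b : α) (t : RTree α) :
      Step (.node (pre ++ (a, t) :: post)) (.node (pre ++ (b, t) :: post))
  | contract (pre post cs : List (α × RTree α)) (a : α) :
      Step (.node (pre ++ (a, .node cs) :: post)) (.node (pre ++ cs ++ post))
  | inner (pre post : List (α × RTree α)) (a : α) (t t' : RTree α) :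
      Step t t' → Step (.node (pre ++ (a, t) :: post)) (.node (pre ++ (a, t') :: post))

/-- `Reaches k t t'` : `t` can be transformed into `t'` by exactly `k` edit operations. -/
def Reaches (k : ℕ) (t t' : RTree α) : Prop :=
  ∃ f : ℕ → RTree α, f 0 = t ∧ f k = t' ∧ ∀ i < k, Step (f i) (f (i + 1))

/-- The (unweighted) tree edit distance between two rooted trees:
the minimum total number of operations transforming both into a common tree. -/
noncomputable def ed (t₁ t₂ : RTree α) : ℕ :=
  sInf {n | ∃ k l t', k + l = n ∧ Reaches k t₁ t' ∧ Reaches l t₂ t'}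

/-- One rerooting move on an ordered tree: cyclically rotate the children of the root,
or move the root to its first child (preserving the cyclic order of all neighbors). -/
inductive RerootStep : RTree α → RTree α → Prop
  | rotate (c : α × RTree α) (cs : List (α × RTree α)) :
      RerootStep (.node (c :: cs)) (.node (cs ++ [c]))
  | shift (a : α) (cs rest : List (α × RTree α)) :
      RerootStep (.node ((a, .node cs) :: rest)) (.node (cs ++ [(a, .node rest)]))

/-- `r` is a rooting of the same underlying ordered unrooted tree as `t`. -/
def Rooting (t r : RTree α) : Prop := Relation.EqvGen RerootStep t r

end RTree

namespace RTree
variable {α : Type}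

/-! ### Auxiliary -/

/-- Inversion for `Step`. -/
lemma Step.inv {L : List (α × RTree α)} {t' : RTree α} (h : Step (node L) t') :
    (∃ pre post a b t, L = pre ++ (a,t)::post ∧ t' = node (pre ++ (b,t)::post)) ∨
    (∃ pre post cs a, L = pre ++ (a, node cs)::post ∧ t' = node (pre++cs++post)) ∨
    (∃ pre post a t t₂, Step t t₂ ∧ L = pre ++ (a,t)::post ∧ t' = node (pre ++ (a,t₂)::post)) := by
  generalize hL : node L = s at h
  cases h with
  | relabel pre post a b t =>
      left; exact ⟨pre, post, a, b, t, by injection hL, rfl⟩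
  | contract pre post cs a =>
      right; left; exact ⟨pre, post, cs, a, by injection hL, rfl⟩
  | inner pre post a t t₂ hs =>
      right; right; exact ⟨pre, post, a, t, t₂, hs, by injection hL, rfl⟩

lemma RerootStep.inv {L : List (α × RTree α)} {u : RTree α} (h : RerootStep (node L) u) :
    (∃ c cs, L = c::cs ∧ u = node (cs++[c])) ∨
    (∃ a cs rest, L = (a, node cs)::rest ∧ u = node (cs ++ [(a, node rest)])) := by
  generalize hL : node L = s at h
  cases h with
  | rotate c cs => left; exact ⟨c, cs, by injection hL, rfl⟩
  | shift a cs rest => right; exact ⟨a, cs, rest, by injection hL, rfl⟩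

/-- An exact-length inductive characterization of `Reaches`. -/
inductive ReachI : ℕ → RTree α → RTree α → Prop
  | zero (t : RTree α) : ReachI 0 t t
  | succ {k : ℕ} {t u t' : RTree α} : Step t u → ReachI k u t' → ReachI (k+1) t t'

lemma reaches_iff {k : ℕ} {t t' : RTree α} : Reaches k t t' ↔ ReachI k t t' := by
  constructor
  · intro h
    induction k generalizing t with
    | zero => obtain ⟨f, h0, hk, _⟩ := h; rw [← h0, hk]; exact ReachI.zero _
    | succ k ih =>
        obtain ⟨f, h0, hk, hs⟩ := h
        have h1 : Step t (f 1) := h0 ▸ hs 0 (Nat.succ_pos k)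
        exact ReachI.succ h1 (ih ⟨fun i => f (i+1), rfl, hk, fun i hi => hs (i+1) (by omega)⟩)
  · intro h
    induction h with
    | zero t => exact ⟨fun _ => t, rfl, rfl, fun i hi => absurd hi (Nat.not_lt_zero i)⟩
    | @succ k t u t' hs _ ih =>
        obtain ⟨f, h0, hk, hst⟩ := ih
        refine ⟨fun i => match i with | 0 => t | j+1 => f j, rfl, hk, fun i hi => ?_⟩
        match i with
        | 0 => simpa [h0] using hs
        | j+1 => exact hst j (by omega)

lemma numEdgesL_append (xs ys : List (α × RTree α)) :
    numEdgesL (xs ++ ys) = numEdgesL xs + numEdgesL ys := by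
  induction xs with
  | nil => simp [numEdgesL]
  | cons p rest ih => obtain ⟨a, t⟩ := p; simp [numEdgesL, ih]; omega

lemma toLeafAux : ∀ (n : ℕ) (cs : List (α × RTree α)), numEdgesL cs ≤ n →
    ∃ m, ReachI m (node cs) (node []) := by
  intro n
  induction n with
  | zero =>
      intro cs h
      cases cs with
      | nil => exact ⟨0, ReachI.zero _⟩
      | cons p rest => obtain ⟨a, t⟩ := p; simp [numEdgesL] at h
  | succ n ih =>
      intro cs h
      cases cs with
      | nil => exact ⟨0, ReachI.zero _⟩
      | cons p rest =>
          obtain ⟨a, t⟩ := p; obtain ⟨ds⟩ := t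
          have hle : numEdgesL (ds ++ rest) ≤ n := by
            rw [numEdgesL_append]
            simp [numEdgesL, numEdges, numEdgesL_append] at h
            omega
          obtain ⟨m, hm⟩ := ih (ds ++ rest) hle
          have hstep : Step (node ((a, node ds) :: rest)) (node (ds ++ rest)) := by
            simpa using Step.contract [] rest ds a
          exact ⟨m+1, ReachI.succ hstep hm⟩

lemma toLeaf (t : RTree α) : ∃ m, ReachI m t (node ([] : List (α × RTree α))) := by
  obtain ⟨cs⟩ := t; exact toLeafAux (numEdgesL cs) cs le_rfl


open Relation

/-- Arbitrary cyclic rotations of the root's children are rerootings. -/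
lemma rotAll (xs ys : List (α × RTree α)) :
    ReflTransGen RerootStep (node (xs ++ ys)) (node (ys ++ xs)) := by
  induction xs generalizing ys with
  | nil => simp; exact ReflTransGen.refl
  | cons x xs ih =>
      have h1 : RerootStep (node ((x :: xs) ++ ys)) (node (xs ++ (ys ++ [x]))) := by
        simpa using RerootStep.rotate x (xs ++ ys)
      have h2 := ih (ys ++ [x])
      have : (ys ++ [x]) ++ xs = ys ++ (x :: xs) := by simp
      rw [this] at h2
      exact ReflTransGen.head h1 h2

lemma rerootRev {t u : RTree α} (h : RerootStep t u) : ReflTransGen RerootStep u t := by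
  cases h with
  | rotate c cs => simpa using rotAll cs [c]
  | shift a cs rest =>
      have h1 : ReflTransGen RerootStep (node (cs ++ [(a, node rest)]))
          (node ((a, node rest) :: cs)) := by simpa using rotAll cs [(a, node rest)]
      have h2 : RerootStep (node ((a, node rest) :: cs)) (node (rest ++ [(a, node cs)])) :=
        RerootStep.shift a rest cs
      have h3 : ReflTransGen RerootStep (node (rest ++ [(a, node cs)]))
          (node ((a, node cs) :: rest)) := by simpa using rotAll rest [(a, node cs)]
      exact (h1.tail h2).trans h3

lemma rtgRev {a b : RTree α} (h : ReflTransGen RerootStep a b) :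
    ReflTransGen RerootStep b a := by
  induction h with
  | refl => exact ReflTransGen.refl
  | tail _ hstep ih => exact (rerootRev hstep).trans ih

lemma rooting_iff_rtg {a b : RTree α} : Rooting a b ↔ ReflTransGen RerootStep a b := by
  constructor
  · intro h
    induction h with
    | rel x y hxy => exact ReflTransGen.single hxy
    | refl x => exact ReflTransGen.refl
    | symm x y _ ih => exact rtgRev ih
    | trans x y z _ _ ih1 ih2 => exact ih1.trans ih2
  · intro h
    induction h with
    | refl => exact EqvGen.refl _
    | tail _ hstep ih => exact EqvGen.trans _ _ _ ih (EqvGen.rel _ _ hstep)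

/-- A root-level step can be extended on the right of the child list. -/
lemma step_append_right {xs ys : List (α × RTree α)} (zs : List (α × RTree α))
    (h : Step (node xs) (node ys)) : Step (node (xs ++ zs)) (node (ys ++ zs)) := by
  rcases h.inv with ⟨pre, post, a, b, t, hx, hy⟩ | ⟨pre, post, cs, a, hx, hy⟩ |
    ⟨pre, post, a, t, t₂, hs, hx, hy⟩
  · injection hy with hy
    subst hx hy
    simpa [List.append_assoc] using Step.relabel pre (post ++ zs) a b t
  · injection hy with hy
    subst hx hy
    simpa [List.append_assoc] using Step.contract pre (post ++ zs) cs a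
  · injection hy with hy
    subst hx hy
    simpa [List.append_assoc] using Step.inner pre (post ++ zs) a t t₂ hs


/-- Forward commutation: rerooting the source of an edit step. -/
lemma fwd {t t' u : RTree α} (hs : Step t t') (hr : RerootStep t u) :
    ∃ u', Step u u' ∧ ReflTransGen RerootStep t' u' := by
  obtain ⟨L⟩ := t
  rcases hr.inv with ⟨c, cs, hL1, rfl⟩ | ⟨g, ds, rest, hL1, rfl⟩
  · -- rotate
    subst hL1
    rcases hs.inv with ⟨pre, post, x, y, s, hL2, rfl⟩ | ⟨pre, post, es, x, hL2, rfl⟩ |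
      ⟨pre, post, x, s, s₂, hss, hL2, rfl⟩
    · cases pre with
      | nil =>
          simp only [List.nil_append] at hL2
          injection hL2 with h1 h2; subst h1; subst h2
          refine ⟨node (cs ++ [(y, s)]), ?_, ?_⟩
          · simpa using Step.relabel cs [] x y s
          · exact ReflTransGen.single (by simpa using RerootStep.rotate (y, s) cs)
      | cons p pre =>
          rw [List.cons_append] at hL2
          injection hL2 with h1 h2; subst h1; subst h2
          refine ⟨node (pre ++ (y, s) :: (post ++ [c])), ?_, ?_⟩
          · simpa [List.append_assoc] using Step.relabel pre (post ++ [c]) x y s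
          · exact ReflTransGen.single
              (by simpa [List.append_assoc] using RerootStep.rotate c (pre ++ (y, s) :: post))
    · cases pre with
      | nil =>
          simp only [List.nil_append] at hL2
          injection hL2 with h1 h2; subst h1; subst h2
          refine ⟨node (cs ++ es), ?_, ?_⟩
          · simpa using Step.contract cs [] es x
          · simpa using rotAll es cs
      | cons p pre =>
          rw [List.cons_append] at hL2
          injection hL2 with h1 h2; subst h1; subst h2
          refine ⟨node (pre ++ es ++ (post ++ [c])), ?_, ?_⟩
          · simpa [List.append_assoc] using Step.contract pre (post ++ [c]) es x
          · exact ReflTransGen.single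
              (by simpa [List.append_assoc] using RerootStep.rotate c (pre ++ es ++ post))
    · cases pre with
      | nil =>
          simp only [List.nil_append] at hL2
          injection hL2 with h1 h2; subst h1; subst h2
          refine ⟨node (cs ++ [(x, s₂)]), ?_, ?_⟩
          · simpa using Step.inner cs [] x s s₂ hss
          · exact ReflTransGen.single (by simpa using RerootStep.rotate (x, s₂) cs)
      | cons p pre =>
          rw [List.cons_append] at hL2
          injection hL2 with h1 h2; subst h1; subst h2
          refine ⟨node (pre ++ (x, s₂) :: (post ++ [c])), ?_, ?_⟩
          · simpa [List.append_assoc] using Step.inner pre (post ++ [c]) x s s₂ hss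
          · exact ReflTransGen.single
              (by simpa [List.append_assoc] using RerootStep.rotate c (pre ++ (x, s₂) :: post))
  · -- shift
    subst hL1
    rcases hs.inv with ⟨pre, post, x, y, s, hL2, rfl⟩ | ⟨pre, post, es, x, hL2, rfl⟩ |
      ⟨pre, post, x, s, s₂, hss, hL2, rfl⟩
    · cases pre with
      | nil =>
          simp only [List.nil_append] at hL2
          injection hL2 with h1 h2
          injection h1 with ha hb
          subst ha; subst hb; subst h2
          refine ⟨node (ds ++ [(y, node rest)]), ?_, ?_⟩
          · simpa using Step.relabel ds [] g y (node rest)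
          · exact ReflTransGen.single (by simpa using RerootStep.shift y ds rest)
      | cons p pre =>
          rw [List.cons_append] at hL2
          injection hL2 with h1 h2; subst h1; subst h2
          refine ⟨node (ds ++ [(g, node (pre ++ (y, s) :: post))]), ?_, ?_⟩
          · simpa using Step.inner ds [] g _ _ (Step.relabel pre post x y s)
          · exact ReflTransGen.single
              (by simpa using RerootStep.shift g ds (pre ++ (y, s) :: post))
    · cases pre with
      | nil =>
          simp only [List.nil_append] at hL2
          injection hL2 with h1 h2
          injection h1 with ha hb
          injection hb with hb
          subst ha; subst hb; subst h2
          refine ⟨node (ds ++ rest), ?_, ?_⟩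
          · simpa using Step.contract ds [] rest g
          · simpa using (ReflTransGen.refl :
              ReflTransGen RerootStep (node (ds ++ rest)) (node (ds ++ rest)))
      | cons p pre =>
          rw [List.cons_append] at hL2
          injection hL2 with h1 h2; subst h1; subst h2
          refine ⟨node (ds ++ [(g, node (pre ++ es ++ post))]), ?_, ?_⟩
          · simpa using Step.inner ds [] g _ _ (Step.contract pre post es x)
          · exact ReflTransGen.single
              (by simpa [List.append_assoc] using RerootStep.shift g ds (pre ++ es ++ post))
    · cases pre with
      | nil =>
          simp only [List.nil_append] at hL2
          injection hL2 with h1 h2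
          injection h1 with ha hb
          subst ha; subst hb; subst h2
          obtain ⟨ds₂⟩ := s₂
          refine ⟨node (ds₂ ++ [(g, node rest)]), ?_, ?_⟩
          · exact step_append_right _ hss
          · exact ReflTransGen.single (by simpa using RerootStep.shift g ds₂ rest)
      | cons p pre =>
          rw [List.cons_append] at hL2
          injection hL2 with h1 h2; subst h1; subst h2
          refine ⟨node (ds ++ [(g, node (pre ++ (x, s₂) :: post))]), ?_, ?_⟩
          · simpa using Step.inner ds [] g _ _ (Step.inner pre post x s s₂ hss)
          · exact ReflTransGen.single
              (by simpa using RerootStep.shift g ds (pre ++ (x, s₂) :: post))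

/-- Backward commutation: rerooting the target of an edit step. -/
lemma bwd {a b b' : RTree α} (hs : Step a b) (hr : RerootStep b b') :
    ∃ a', ReflTransGen RerootStep a a' ∧ Step a' b' := by
  obtain ⟨La⟩ := a
  rcases hs.inv with ⟨pre, post, x, y, s, rfl, rfl⟩ | ⟨pre, post, es, x, rfl, rfl⟩ |
    ⟨pre, post, x, s, s₂, hss, rfl, rfl⟩
  · -- relabel
    rcases hr.inv with ⟨c, cs, hL2, rfl⟩ | ⟨g, fs, rest, hL2, rfl⟩
    · cases pre with
      | nil =>
          simp only [List.nil_append] at hL2 ⊢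
          injection hL2 with h1 h2; subst h1; subst h2
          refine ⟨node (post ++ [(x, s)]), ?_, ?_⟩
          · exact ReflTransGen.single (by simpa using RerootStep.rotate (x, s) post)
          · simpa using Step.relabel post [] x y s
      | cons p pre =>
          rw [List.cons_append] at hL2
          injection hL2 with h1 h2; subst h1; subst h2
          refine ⟨node (pre ++ (x, s) :: (post ++ [p])), ?_, ?_⟩
          · exact ReflTransGen.single
              (by simpa [List.append_assoc] using RerootStep.rotate p (pre ++ (x, s) :: post))
          · simpa [List.append_assoc] using Step.relabel pre (post ++ [p]) x y s
    · cases pre with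
      | nil =>
          simp only [List.nil_append] at hL2 ⊢
          injection hL2 with h1 h2
          injection h1 with ha hb
          subst ha; subst hb; subst h2
          refine ⟨node (fs ++ [(x, node post)]), ?_, ?_⟩
          · exact ReflTransGen.single (by simpa using RerootStep.shift x fs post)
          · simpa using Step.relabel fs [] x y (node post)
      | cons p pre =>
          rw [List.cons_append] at hL2
          injection hL2 with h1 h2; subst h1; subst h2
          refine ⟨node (fs ++ [(g, node (pre ++ (x, s) :: post))]), ?_, ?_⟩
          · exact ReflTransGen.single
              (by simpa using RerootStep.shift g fs (pre ++ (x, s) :: post))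
          · simpa using Step.inner fs [] g _ _ (Step.relabel pre post x y s)
  · -- contract : b = node (pre ++ es ++ post)
    rcases hr.inv with ⟨c, cs, hL2, rfl⟩ | ⟨g, fs, rest, hL2, rfl⟩
    · cases pre with
      | nil =>
          simp only [List.nil_append] at hL2 ⊢
          cases es with
          | nil =>
              simp only [List.nil_append] at hL2
              subst hL2
              refine ⟨node (cs ++ (x, node []) :: [c]), ?_, ?_⟩
              · refine ReflTransGen.head (RerootStep.rotate (x, node []) (c :: cs)) ?_
                have he : cs ++ (x, node []) :: [c] = (cs ++ [(x, node [])]) ++ [c] :=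
                  List.append_cons _ _ _
                exact ReflTransGen.single
                  (by rw [he]; exact RerootStep.rotate c (cs ++ [(x, node [])]))
              · simpa using Step.contract cs [c] [] x
          | cons e es =>
              rw [List.cons_append] at hL2
              injection hL2 with h1 h2; subst h1; subst h2
              refine ⟨node (es ++ (x, node post) :: [e]), ?_, ?_⟩
              · refine ReflTransGen.head (RerootStep.shift x (e :: es) post) ?_
                have he : es ++ (x, node post) :: [e] = (es ++ [(x, node post)]) ++ [e] :=
                  List.append_cons _ _ _
                exact ReflTransGen.single
                  (by rw [he]; exact RerootStep.rotate e (es ++ [(x, node post)]))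
              · simpa [List.append_assoc] using Step.contract es [e] post x
      | cons p pre =>
          rw [List.cons_append] at hL2
          injection hL2 with h1 h2; subst h1; subst h2
          refine ⟨node (pre ++ (x, node es) :: (post ++ [p])), ?_, ?_⟩
          · exact ReflTransGen.single
              (by simpa [List.append_assoc] using
                RerootStep.rotate p (pre ++ (x, node es) :: post))
          · simpa [List.append_assoc] using Step.contract pre (post ++ [p]) es x
    · cases pre with
      | nil =>
          simp only [List.nil_append] at hL2 ⊢
          cases es with
          | nil =>
              simp only [List.nil_append] at hL2
              subst hL2
              refine ⟨node (fs ++ [(g, node (rest ++ [(x, node [])]))]), ?_, ?_⟩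
              · refine ReflTransGen.head (RerootStep.rotate (x, node []) ((g, node fs) :: rest)) ?_
                exact ReflTransGen.single
                  (by simpa using RerootStep.shift g fs (rest ++ [(x, node [])]))
              · simpa using Step.inner fs [] g _ _ (Step.contract rest [] [] x)
          | cons e es =>
              rw [List.cons_append] at hL2
              injection hL2 with h1 h2
              subst h1; subst h2
              refine ⟨node (fs ++ [(g, node (es ++ [(x, node post)]))]), ?_, ?_⟩
              · refine ReflTransGen.head (RerootStep.shift x ((g, node fs) :: es) post) ?_
                exact ReflTransGen.single
                  (by simpa using RerootStep.shift g fs (es ++ [(x, node post)]))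
              · simpa using Step.inner fs [] g _ _ (Step.contract es [] post x)
      | cons p pre =>
          rw [List.cons_append] at hL2
          injection hL2 with h1 h2; subst h1; subst h2
          refine ⟨node (fs ++ [(g, node (pre ++ (x, node es) :: post))]), ?_, ?_⟩
          · exact ReflTransGen.single
              (by simpa using RerootStep.shift g fs (pre ++ (x, node es) :: post))
          · simpa [List.append_assoc] using Step.inner fs [] g _ _ (Step.contract pre post es x)
  · -- inner
    rcases hr.inv with ⟨c, cs, hL2, rfl⟩ | ⟨g, fs, rest, hL2, rfl⟩
    · cases pre with
      | nil =>
          simp only [List.nil_append] at hL2 ⊢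
          injection hL2 with h1 h2; subst h1; subst h2
          refine ⟨node (post ++ [(x, s)]), ?_, ?_⟩
          · exact ReflTransGen.single (by simpa using RerootStep.rotate (x, s) post)
          · simpa using Step.inner post [] x s s₂ hss
      | cons p pre =>
          rw [List.cons_append] at hL2
          injection hL2 with h1 h2; subst h1; subst h2
          refine ⟨node (pre ++ (x, s) :: (post ++ [p])), ?_, ?_⟩
          · exact ReflTransGen.single
              (by simpa [List.append_assoc] using RerootStep.rotate p (pre ++ (x, s) :: post))
          · simpa [List.append_assoc] using Step.inner pre (post ++ [p]) x s s₂ hss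
    · cases pre with
      | nil =>
          simp only [List.nil_append] at hL2 ⊢
          injection hL2 with h1 h2
          injection h1 with ha hb
          subst ha; subst hb; subst h2
          obtain ⟨gs⟩ := s
          refine ⟨node (gs ++ [(x, node post)]), ?_, ?_⟩
          · exact ReflTransGen.single (by simpa using RerootStep.shift x gs post)
          · exact step_append_right _ hss
      | cons p pre =>
          rw [List.cons_append] at hL2
          injection hL2 with h1 h2; subst h1; subst h2
          refine ⟨node (fs ++ [(g, node (pre ++ (x, s) :: post))]), ?_, ?_⟩
          · exact ReflTransGen.single
              (by simpa using RerootStep.shift g fs (pre ++ (x, s) :: post))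
          · simpa using Step.inner fs [] g _ _ (Step.inner pre post x s s₂ hss)

lemma fwdChainStep {t t' u : RTree α} (hs : Step t t') (hr : ReflTransGen RerootStep t u) :
    ∃ u', Step u u' ∧ ReflTransGen RerootStep t' u' := by
  induction hr with
  | refl => exact ⟨t', hs, ReflTransGen.refl⟩
  | tail _ hstep ih =>
      obtain ⟨v', hv, hrt⟩ := ih
      obtain ⟨u', hu, hrt₂⟩ := fwd hv hstep
      exact ⟨u', hu, hrt.trans hrt₂⟩

lemma fwdReaches {k : ℕ} {t t' u : RTree α} (h : ReachI k t t')
    (hr : ReflTransGen RerootStep t u) :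
    ∃ u', ReachI k u u' ∧ ReflTransGen RerootStep t' u' := by
  induction h generalizing u with
  | zero t => exact ⟨u, ReachI.zero u, hr⟩
  | @succ k t m t' hs _ ih =>
      obtain ⟨u₁, hu₁, hr₁⟩ := fwdChainStep hs hr
      obtain ⟨u', hu', hr'⟩ := ih hr₁
      exact ⟨u', ReachI.succ hu₁ hu', hr'⟩

lemma bwdChainStep {a b b' : RTree α} (hs : Step a b) (hr : ReflTransGen RerootStep b b') :
    ∃ a', ReflTransGen RerootStep a a' ∧ Step a' b' := by
  induction hr with
  | refl => exact ⟨a, ReflTransGen.refl, hs⟩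
  | tail _ hstep ih =>
      obtain ⟨a₁, hra, hs₁⟩ := ih
      obtain ⟨a', hra', hs'⟩ := bwd hs₁ hstep
      exact ⟨a', hra.trans hra', hs'⟩

lemma bwdReaches {l : ℕ} {s t' t'' : RTree α} (h : ReachI l s t')
    (hr : ReflTransGen RerootStep t' t'') :
    ∃ r, ReflTransGen RerootStep s r ∧ ReachI l r t'' := by
  induction h generalizing t'' with
  | zero t => exact ⟨t'', hr, ReachI.zero t''⟩
  | @succ k s m t' hs _ ih =>
      obtain ⟨rm, hrm, hre⟩ := ih hr
      obtain ⟨r, hr₂, hs'⟩ := bwdChainStep hs hrm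
      exact ⟨r, hr₂, ReachI.succ hs' hre⟩

end RTree

/-- for any unrooted trees `T₁, T₂` (given by rooted representatives) and any
rooting `r₁` of `T₁`, there is a rooting `r₂` of `T₂` such that the rooted edit distance
between `r₁` and `r₂` equals the unrooted edit distance (the minimum over all rootings). -/
theorem stmt5 {α : Type} (T₁ T₂ r₁ : RTree α) (h₁ : RTree.Rooting T₁ r₁) :
    ∃ r₂, RTree.Rooting T₂ r₂ ∧
      RTree.ed r₁ r₂ =
        sInf {d | ∃ s₁ s₂, RTree.Rooting T₁ s₁ ∧ RTree.Rooting T₂ s₂ ∧ d = RTree.ed s₁ s₂} := by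
  classical
  set S : Set ℕ :=
    {d | ∃ s₁ s₂, RTree.Rooting T₁ s₁ ∧ RTree.Rooting T₂ s₂ ∧ d = RTree.ed s₁ s₂} with hSdef
  have hSne : S.Nonempty :=
    ⟨RTree.ed T₁ T₂, T₁, T₂, Relation.EqvGen.refl _, Relation.EqvGen.refl _, rfl⟩
  obtain ⟨s₁, s₂, hs₁, hs₂, hd⟩ := Nat.sInf_mem hSne
  -- the defining set of `ed s₁ s₂` is nonempty
  obtain ⟨k₀, hk₀⟩ := RTree.toLeaf s₁
  obtain ⟨l₀, hl₀⟩ := RTree.toLeaf s₂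
  have hNne : {n | ∃ k l t', k + l = n ∧ RTree.Reaches k s₁ t' ∧ RTree.Reaches l s₂ t'}.Nonempty :=
    ⟨k₀ + l₀, k₀, l₀, RTree.node [], rfl, RTree.reaches_iff.mpr hk₀, RTree.reaches_iff.mpr hl₀⟩
  have hmem := Nat.sInf_mem hNne
  rw [← RTree.ed] at hmem
  obtain ⟨k, l, t', hkl, hr₁', hr₂'⟩ := hmem
  replace hr₁' := RTree.reaches_iff.mp hr₁'
  replace hr₂' := RTree.reaches_iff.mp hr₂'
  -- reroot s₁ to r₁
  have hroot : Relation.ReflTransGen RTree.RerootStep s₁ r₁ :=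
    RTree.rooting_iff_rtg.mp (Relation.EqvGen.trans _ _ _ (Relation.EqvGen.symm _ _ hs₁) h₁)
  obtain ⟨t'', hre₁, hrt⟩ := RTree.fwdReaches hr₁' hroot
  obtain ⟨r₂, hre₂root, hre₂⟩ := RTree.bwdReaches hr₂' hrt
  have hr₂rooting : RTree.Rooting T₂ r₂ :=
    Relation.EqvGen.trans _ _ _ hs₂ (RTree.rooting_iff_rtg.mpr hre₂root)
  refine ⟨r₂, hr₂rooting, le_antisymm ?_ ?_⟩
  · -- ed r₁ r₂ ≤ sInf S
    have : RTree.ed r₁ r₂ ≤ k + l :=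
      Nat.sInf_le ⟨k, l, t'', rfl, RTree.reaches_iff.mpr hre₁, RTree.reaches_iff.mpr hre₂⟩
    calc RTree.ed r₁ r₂ ≤ k + l := this
      _ = RTree.ed s₁ s₂ := hkl
      _ = sInf S := hd.symm
  · -- sInf S ≤ ed r₁ r₂
    exact Nat.sInf_le ⟨r₁, r₂, h₁, hr₂rooting, rfl⟩
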